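/- arXiv:2108.06913 — 2 statements merged into one kernel-verified Lean document; each statement's English description precedes it below -/
import Mathlib

section
/- Let X be a compact topological space, Y a Hausdorff topological space, and c : X → Y a continuous map such that every fiber c⁻¹(y) (y ∈ Y) is preconnected. Then the induced continuous map c̄ : W_c → Y restricts to a homeomorphism from the Reeb space W_c of c onto the image c(X) ⊆ Y with its subspace topology. -/
/-- The Reeb relation of a map `c : X → Y`: two points are related iff there is some `y : Y`
such that they lie in the same connected component of the fiber `c ⁻¹' {y}`. -/
def reebRel {X Y : Type*} [TopologicalSpace X] (c : X → Y) (x₁ x₂ : X) : Prop :=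
  ∃ y : Y, x₁ ∈ connectedComponentIn (c ⁻¹' {y}) x₂

lemma reebRel_imp {X Y : Type*} [TopologicalSpace X] (c : X → Y) {x₁ x₂ : X}
    (h : reebRel c x₁ x₂) : c x₁ = c x₂ := by
  obtain ⟨y, hx⟩ := h
  have h1 : x₁ ∈ c ⁻¹' {y} := connectedComponentIn_subset _ _ hx
  have h2 : x₂ ∈ c ⁻¹' {y} := by
    by_contra h
    rw [connectedComponentIn_eq_empty h] at hx
    exact hx
  simp only [Set.mem_preimage, Set.mem_singleton_iff] at h1 h2
  rw [h1, h2]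

lemma reebRel_of_eq {X Y : Type*} [TopologicalSpace X] (c : X → Y)
    (hfib : ∀ y : Y, IsPreconnected (c ⁻¹' {y})) {x₁ x₂ : X}
    (h : c x₁ = c x₂) : reebRel c x₁ x₂ := by
  refine ⟨c x₂, ?_⟩
  have h2 : x₂ ∈ c ⁻¹' {c x₂} := rfl
  exact (hfib (c x₂)).subset_connectedComponentIn h2 (subset_refl _) (by simp [h])

/-- The canonical map from the Reeb space to the image of `c`. -/
def reebToRange {X Y : Type*} [TopologicalSpace X] (c : X → Y) :
    Quot (reebRel c) → Set.range c :=
  Quot.lift (fun x => ⟨c x, Set.mem_range_self x⟩)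
    (fun _ _ hab => Subtype.ext (reebRel_imp c hab))

/-- For a continuous map `c` from a compact space to a Hausdorff space with preconnected
fibers, the induced map `c̄` restricts to a homeomorphism from the Reeb space `W_c` onto the
image `c(X)` with its subspace topology. -/
theorem reeb_homeomorph_image_of_preconnected_fibers {X Y : Type*}
    [TopologicalSpace X] [TopologicalSpace Y] [CompactSpace X] [T2Space Y]
    (c : X → Y) (hc : Continuous c) (hfib : ∀ y : Y, IsPreconnected (c ⁻¹' {y})) :
    ∃ h : Quot (reebRel c) ≃ₜ Set.range c,
      ∀ x : X, (h (Quot.mk (reebRel c) x) : Y) = c x := by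
  have : CompactSpace (Quot (reebRel c)) := by
    constructor
    have : (Set.univ : Set (Quot (reebRel c))) = Set.range (Quot.mk (reebRel c)) := by
      ext q; simp [Quot.exists_rep q]
    rw [this]
    exact isCompact_range continuous_quot_mk
  have hfcont : Continuous (reebToRange c) :=
    continuous_quot_lift _ (Continuous.subtype_mk hc _)
  have hbij : Function.Bijective (reebToRange c) := by
    constructor
    · intro a b hab
      obtain ⟨x, rfl⟩ := Quot.exists_rep a
      obtain ⟨y, rfl⟩ := Quot.exists_rep b
      exact Quot.sound (reebRel_of_eq c hfib (congrArg Subtype.val hab))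
    · rintro ⟨y, x, rfl⟩
      exact ⟨Quot.mk _ x, rfl⟩
  exact ⟨Continuous.homeoOfEquivCompactToT2 (f := Equiv.ofBijective (reebToRange c) hbij)
    hfcont, fun x => rfl⟩
end

section
/- Let m ≥ 2, let Dᵐ = {x ∈ ℝᵐ : ‖x‖ ≤ 1} be the closed unit disk, and let f : Dᵐ → ℝ be the restriction of x ↦ ‖x‖². Then every fiber of f is preconnected, and the induced map f̄ : W_f → ℝ from the Reeb space of f is a homeomorphism onto the closed interval [0,1]; in particular, the Reeb space of the height function on the m-dimensional unit disk is homeomorphic to a closed interval, with the class of the origin (the unique singular point) mapped to the endpoint 0. -/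
/-- The height function `x ↦ ‖x‖²` on the `m`-dimensional unit disk
`Dᵐ = {x ∈ ℝᵐ : ‖x‖ ≤ 1}`. -/
noncomputable def heightFun (m : ℕ) :
    (Metric.closedBall (0 : EuclideanSpace ℝ (Fin m)) 1) → ℝ :=
  fun x => ‖(x : EuclideanSpace ℝ (Fin m))‖ ^ 2

/-- For `m ≥ 2`, every fiber of the height function `x ↦ ‖x‖²` on the unit disk `Dᵐ` is
preconnected, and the induced map `f̄ : W_f → ℝ` is a homeomorphism from the Reeb space onto
the closed interval `[0,1]`, with the class of the origin (the unique singular point) mapped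
to the endpoint `0`. -/
theorem reeb_of_disk_height_function (m : ℕ) (hm : 2 ≤ m) :
    (∀ y : ℝ, IsPreconnected (heightFun m ⁻¹' {y})) ∧
      ∃ h : Quot (reebRel (heightFun m)) ≃ₜ Set.Icc (0 : ℝ) 1,
        (∀ x, (h (Quot.mk (reebRel (heightFun m)) x) : ℝ) = heightFun m x) ∧
          (h (Quot.mk (reebRel (heightFun m))
              ⟨0, by simp⟩) : ℝ) = 0 := by
  open Metric Set in
  set E := EuclideanSpace ℝ (Fin m)
  have hrank : 1 < Module.rank ℝ E := by
    apply Module.one_lt_rank_of_one_lt_finrank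
    rw [finrank_euclideanSpace, Fintype.card_fin]
    omega
  -- fibers are preconnected
  have hf : Continuous (heightFun m) := by
    exact (continuous_norm.comp continuous_subtype_val).pow 2
  have hpre : ∀ y : ℝ, IsPreconnected (heightFun m ⁻¹' {y}) := by
    intro y
    rcases le_or_gt 0 y with hy | hy
    · rcases le_or_gt y 1 with hy1 | hy1
      · -- fiber is preimage of sphere √y
        rw [← Topology.IsInducing.subtypeVal.isPreconnected_image]
        have himg : Subtype.val '' (heightFun m ⁻¹' {y}) = sphere (0 : E) (Real.sqrt y) := by
          ext x
          simp only [mem_image, mem_sphere, dist_zero_right]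
          constructor
          · rintro ⟨z, hz, rfl⟩
            have : ‖(z : E)‖ ^ 2 = y := hz
            rw [← this, Real.sqrt_sq (norm_nonneg _)]
          · intro hx
            have hx2 : ‖x‖ ^ 2 = y := by
              rw [hx, Real.sq_sqrt hy]
            refine ⟨⟨x, ?_⟩, hx2, rfl⟩
            simp only [mem_closedBall, dist_zero_right]
            rw [hx]
            exact Real.sqrt_le_one.mpr hy1
        rw [himg]
        exact (isConnected_sphere hrank 0 (Real.sqrt_nonneg y)).isPreconnected
      · convert isPreconnected_empty
        ext x
        simp only [mem_preimage, mem_singleton_iff, mem_empty_iff_false, iff_false]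
        simp only [heightFun]
        intro h
        have hx := x.2
        simp only [mem_closedBall, dist_zero_right] at hx
        nlinarith [norm_nonneg (x : E)]
    · convert isPreconnected_empty
      ext x
      simp only [mem_preimage, mem_singleton_iff, mem_empty_iff_false, iff_false]
      simp only [heightFun]
      intro h
      nlinarith [sq_nonneg ‖(x : E)‖]
  refine ⟨hpre, ?_⟩
  -- reebRel ↔ equal heights
  have hrel : ∀ x₁ x₂, reebRel (heightFun m) x₁ x₂ ↔ heightFun m x₁ = heightFun m x₂ := by
    intro x₁ x₂
    constructor
    · rintro ⟨y, hy⟩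
      have h2 : x₂ ∈ heightFun m ⁻¹' {y} := by
        by_contra h
        rw [connectedComponentIn_eq_empty h] at hy
        exact hy
      have h1 : x₁ ∈ heightFun m ⁻¹' {y} := connectedComponentIn_subset _ _ hy
      simp only [mem_preimage, mem_singleton_iff] at h1 h2
      rw [h1, h2]
    · intro h
      refine ⟨heightFun m x₂, ?_⟩
      have h2 : x₂ ∈ heightFun m ⁻¹' {heightFun m x₂} := rfl
      have h1 : x₁ ∈ heightFun m ⁻¹' {heightFun m x₂} := h
      exact (hpre (heightFun m x₂)).subset_connectedComponentIn h2 le_rfl h1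
  -- range in Icc
  have hmem : ∀ x : (closedBall (0 : E) 1), heightFun m x ∈ Icc (0:ℝ) 1 := by
    intro x
    have hx := x.2
    simp only [mem_closedBall, dist_zero_right] at hx
    simp only [heightFun]
    constructor
    · positivity
    · nlinarith [norm_nonneg (x : E)]
  -- the lifted map
  let g : Quot (reebRel (heightFun m)) → Icc (0:ℝ) 1 :=
    Quot.lift (fun x => ⟨heightFun m x, hmem x⟩)
      (fun a b hab => Subtype.ext ((hrel a b).mp hab))
  have hg : ∀ x, (g (Quot.mk (reebRel (heightFun m)) x) : ℝ) = heightFun m x := fun x => by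
    simp only [g, Quot.lift_mk]
  have hgcont : Continuous g := continuous_quot_lift _ (hf.subtype_mk _)
  have hbij : Function.Bijective g := by
    constructor
    · rintro ⟨x₁⟩ ⟨x₂⟩ h
      apply Quot.sound
      rw [hrel]
      have h' := congrArg Subtype.val h
      rw [hg, hg] at h'
      exact h'
    · rintro ⟨y, hy0, hy1⟩
      have hne : Nonempty (Fin m) := ⟨⟨0, by omega⟩⟩
      refine ⟨Quot.mk _ ⟨Real.sqrt y • EuclideanSpace.single ⟨0, by omega⟩ (1:ℝ), ?_⟩, ?_⟩
      · simp only [mem_closedBall, dist_zero_right, norm_smul, EuclideanSpace.norm_single,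
          norm_one, mul_one, Real.norm_eq_abs, abs_of_nonneg (Real.sqrt_nonneg y)]
        exact Real.sqrt_le_one.mpr hy1
      · apply Subtype.ext
        rw [hg]
        show heightFun m _ = y
        simp only [heightFun, norm_smul, EuclideanSpace.norm_single, norm_one, mul_one,
          Real.norm_eq_abs, abs_of_nonneg (Real.sqrt_nonneg y)]
        exact Real.sq_sqrt hy0
  haveI : CompactSpace (closedBall (0:E) 1) :=
    isCompact_iff_compactSpace.mp (isCompact_closedBall _ _)
  let e : Quot (reebRel (heightFun m)) ≃ Icc (0:ℝ) 1 := Equiv.ofBijective g hbij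
  have hecont : Continuous e := hgcont
  refine ⟨Continuous.homeoOfEquivCompactToT2 (f := e) hecont, ?_, ?_⟩
  · intro x
    show (g (Quot.mk (reebRel (heightFun m)) x) : ℝ) = heightFun m x
    exact hg x
  · show (g (Quot.mk (reebRel (heightFun m)) ⟨0, by simp⟩) : ℝ) = 0
    rw [hg]
    simp [heightFun]
end
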